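/- For the bivariate Student t distribution with ν degrees of freedom and correlation parameter ρ, the mutual information has the form I(X,Y) = -½ log(1-ρ²) + λ_ν where λ_ν depends only on ν and not on ρ; in particular, for ρ = 0 the mutual information equals λ_ν, which is nonzero for finite ν, so zero correlation does not imply independence. -/

import Mathlib

open MeasureTheory

/-- Joint density of the standardized bivariate Student t with ν degrees of
freedom and correlation parameter ρ. -/
noncomputable def bivStudentT (ν ρ x y : ℝ) : ℝ :=
  (1 / (2 * Real.pi * Real.sqrt (1 - ρ ^ 2))) *
    (1 + (x ^ 2 - 2 * ρ * x * y + y ^ 2) / (ν * (1 - ρ ^ 2))) ^ (-(ν + 2) / 2)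

/-- Marginal density of the (standard) Student t with ν degrees of freedom. -/
noncomputable def studentT (ν x : ℝ) : ℝ :=
  (Real.Gamma ((ν + 1) / 2) / (Real.sqrt (ν * Real.pi) * Real.Gamma (ν / 2))) *
    (1 + x ^ 2 / ν) ^ (-(ν + 1) / 2)

/-- Mutual information of the bivariate Student t: the KL divergence of the
joint density from the product of the marginals. -/
noncomputable def studentTMI (ν ρ : ℝ) : ℝ :=
  ∫ x : ℝ, ∫ y : ℝ,
    bivStudentT ν ρ x y *
      Real.log (bivStudentT ν ρ x y / (studentT ν x * studentT ν y))

open Real Set Filter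

namespace STAux

/-- centered bivariate density with ρ = 0 -/
noncomputable def f0 (ν x y : ℝ) : ℝ := (2 * π)⁻¹ * (1 + (x^2 + y^2)/ν) ^ (-(ν+2)/2)

variable {ν : ℝ} (hν : 0 < ν)

lemma biv_zero (x y : ℝ) : bivStudentT ν 0 x y = f0 ν x y := by
  simp [bivStudentT, f0, Real.sqrt_one, one_div]

lemma sq_lt_one {ρ : ℝ} (hρ : ρ ∈ Set.Ioo (-1:ℝ) 1) : ρ^2 < 1 := by
  rcases hρ with ⟨h1, h2⟩; nlinarith

lemma s_pos {ρ : ℝ} (hρ : ρ ∈ Set.Ioo (-1:ℝ) 1) : 0 < Real.sqrt (1 - ρ^2) :=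
  Real.sqrt_pos.mpr (by have := sq_lt_one hρ; linarith)

lemma s_sq {ρ : ℝ} (hρ : ρ ∈ Set.Ioo (-1:ℝ) 1) : (Real.sqrt (1 - ρ^2))^2 = 1 - ρ^2 :=
  Real.sq_sqrt (by have := sq_lt_one hρ; linarith)

include hν in
lemma biv_sub {ρ : ℝ} (hρ : ρ ∈ Set.Ioo (-1:ℝ) 1) (x v : ℝ) :
    bivStudentT ν ρ x (Real.sqrt (1 - ρ^2) * v + ρ * x) = f0 ν x v / Real.sqrt (1 - ρ^2) := by
  have hs := s_pos hρ
  have hs2 := s_sq hρ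
  have h1 : (1:ℝ) - ρ^2 ≠ 0 := by nlinarith
  have harg : (x ^ 2 - 2 * ρ * x * (Real.sqrt (1 - ρ^2) * v + ρ * x)
      + (Real.sqrt (1 - ρ^2) * v + ρ * x) ^ 2) / (ν * (1 - ρ ^ 2)) = (x^2 + v^2)/ν := by
    rw [div_eq_div_iff (by positivity) hν.ne']
    linear_combination (ν * v^2) * hs2
  rw [bivStudentT, harg, f0]
  rw [one_div, mul_inv, div_eq_mul_inv]
  ring

include hν in
lemma biv_sub' {ρ : ℝ} (hρ : ρ ∈ Set.Ioo (-1:ℝ) 1) (u y : ℝ) :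
    bivStudentT ν ρ (Real.sqrt (1 - ρ^2) * u + ρ * y) y = f0 ν u y / Real.sqrt (1 - ρ^2) := by
  have hs := s_pos hρ
  have hs2 := s_sq hρ
  have h1 : (1:ℝ) - ρ^2 ≠ 0 := by nlinarith
  have harg : ((Real.sqrt (1 - ρ^2) * u + ρ * y) ^ 2
      - 2 * ρ * (Real.sqrt (1 - ρ^2) * u + ρ * y) * y + y ^ 2) / (ν * (1 - ρ ^ 2))
      = (u^2 + y^2)/ν := by
    rw [div_eq_div_iff (by positivity) hν.ne']
    linear_combination (ν * u^2) * hs2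
  rw [bivStudentT, harg, f0]
  rw [one_div, mul_inv, div_eq_mul_inv]
  ring


include hν in
lemma base_pos (q : ℝ) (hq : 0 ≤ q) : 0 < 1 + q/ν := by positivity

noncomputable def Kc (ν : ℝ) : ℝ := Real.Gamma ((ν + 1) / 2) / (Real.sqrt (ν * π) * Real.Gamma (ν / 2))

include hν in
lemma Kc_pos : 0 < Kc ν := by
  have h1 : 0 < Real.Gamma ((ν+1)/2) := Real.Gamma_pos_of_pos (by linarith)
  have h2 : 0 < Real.Gamma (ν/2) := Real.Gamma_pos_of_pos (by linarith)
  have h3 : 0 < Real.sqrt (ν * π) := Real.sqrt_pos.mpr (by positivity)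
  exact div_pos h1 (by positivity)

lemma g_eq (x : ℝ) : studentT ν x = Kc ν * (1 + x^2/ν) ^ (-(ν+1)/2) := rfl

include hν in
lemma g_pos (x : ℝ) : 0 < studentT ν x := by
  rw [g_eq]
  have := Kc_pos hν
  have h : (0:ℝ) < 1 + x^2/ν := by positivity
  positivity

include hν in
lemma f0_pos (x y : ℝ) : 0 < f0 ν x y := by
  have h : (0:ℝ) < 1 + (x^2+y^2)/ν := by positivity
  have := Real.pi_pos
  rw [f0]; positivity

include hν in
lemma biv_pos {ρ : ℝ} (hρ : ρ ∈ Set.Ioo (-1:ℝ) 1) (x y : ℝ) : 0 < bivStudentT ν ρ x y := by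
  have hs := s_pos hρ
  have hs2 := s_sq hρ
  have h2 : 0 < 1 - ρ^2 := by have := sq_lt_one hρ; linarith
  have hq : 0 ≤ x ^ 2 - 2 * ρ * x * y + y ^ 2 := by nlinarith [sq_nonneg (x - ρ*y), sq_nonneg y]
  have h : (0:ℝ) < 1 + (x ^ 2 - 2 * ρ * x * y + y ^ 2) / (ν * (1 - ρ ^ 2)) := by positivity
  have := Real.pi_pos
  rw [bivStudentT]; positivity

/-- norm bound on ℝ × ℝ -/
lemma norm_sq_le (z : ℝ × ℝ) : ‖z‖^2 ≤ z.1^2 + z.2^2 := by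
  rw [Prod.norm_def]
  rcases max_cases ‖z.1‖ ‖z.2‖ with ⟨h, _⟩ | ⟨h, _⟩ <;> rw [h, Real.norm_eq_abs, sq_abs] <;>
    nlinarith [sq_nonneg z.1, sq_nonneg z.2]

lemma one_add_log_le {ε : ℝ} (hε : 0 < ε) {b : ℝ} (hb : 1 ≤ b) :
    1 + Real.log b ≤ (1 + ε⁻¹) * b ^ ε := by
  have hb0 : 0 < b := lt_of_lt_of_le one_pos hb
  have h1 : (1:ℝ) ≤ b ^ ε := Real.one_le_rpow hb hε.le
  have h2 : Real.log b ≤ ε⁻¹ * b ^ ε := by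
    have : ε * Real.log b = Real.log (b ^ ε) := (Real.log_rpow hb0 ε).symm
    have h3 : Real.log (b ^ ε) ≤ b ^ ε - 1 := Real.log_le_sub_one_of_pos (by positivity)
    calc Real.log b = ε⁻¹ * (ε * Real.log b) := by field_simp
    _ = ε⁻¹ * Real.log (b ^ ε) := by rw [this]
    _ ≤ ε⁻¹ * (b ^ ε - 1) := by apply mul_le_mul_of_nonneg_left h3 (by positivity)
    _ ≤ ε⁻¹ * b ^ ε := by nlinarith [inv_pos.mpr hε]
  nlinarith [inv_pos.mpr hε]

/-- Master integrable majorant on ℝ². -/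
lemma integrable_master {c θ : ℝ} (hc : 0 < c) (hθ : 1 < θ) :
    Integrable (fun z : ℝ × ℝ =>
      (1 + c*(z.1^2+z.2^2))^(-θ) * (1 + Real.log (1 + c*(z.1^2+z.2^2)))) := by
  set θ' := (θ+1)/2 with hθ'def
  set ε := (θ-1)/2 with hεdef
  have hε : 0 < ε := by rw [hεdef]; linarith
  have hθ'1 : 1 < θ' := by rw [hθ'def]; linarith
  have hθθ : θ = θ' + ε := by rw [hθ'def, hεdef]; ring
  set m := min c 1 with hmdef
  have hm : 0 < m := lt_min hc one_pos
  have hm1 : m ≤ 1 := min_le_right _ _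
  have hmc : m ≤ c := min_le_left _ _
  have hmaj : Integrable (fun z : ℝ × ℝ =>
      ((1 + ε⁻¹) * m ^ (-θ')) * (1 + ‖z‖^2) ^ (-(2*θ')/2)) := by
    apply Integrable.const_mul
    apply integrable_rpow_neg_one_add_norm_sq
    have : Module.finrank ℝ (ℝ × ℝ) = 2 := by
      simp [Module.finrank_prod, Module.finrank_self]
    rw [this]; norm_num; linarith
  refine hmaj.mono' ?_ (Eventually.of_forall fun z => ?_)
  · apply Continuous.aestronglyMeasurable
    have hb : Continuous (fun z : ℝ × ℝ => 1 + c*(z.1^2+z.2^2)) :=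
      continuous_const.add (continuous_const.mul (((continuous_fst.pow 2)).add ((continuous_snd.pow 2))))
    have hbne : ∀ z : ℝ × ℝ, (1 + c*(z.1^2+z.2^2)) ≠ 0 := by
      intro z; positivity
    exact (hb.rpow_const (fun z => Or.inl (hbne z))).mul
      (continuous_const.add (hb.log hbne))
  · set b := 1 + c*(z.1^2+z.2^2) with hbdef
    have hb1 : 1 ≤ b := by rw [hbdef]; nlinarith [sq_nonneg z.1, sq_nonneg z.2]
    have hb0 : 0 < b := lt_of_lt_of_le one_pos hb1
    have hlog : 0 ≤ Real.log b := Real.log_nonneg hb1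
    have h1 : ‖b ^ (-θ) * (1 + Real.log b)‖ = b ^ (-θ) * (1 + Real.log b) := by
      apply abs_of_nonneg; positivity
    rw [h1]
    have step1 : b ^ (-θ) * (1 + Real.log b) ≤ (1 + ε⁻¹) * b ^ (-θ') := by
      calc b ^ (-θ) * (1 + Real.log b) ≤ b ^ (-θ) * ((1 + ε⁻¹) * b ^ ε) := by
            apply mul_le_mul_of_nonneg_left (one_add_log_le hε hb1) (by positivity)
        _ = (1 + ε⁻¹) * (b ^ (-θ) * b ^ ε) := by ring
        _ = (1 + ε⁻¹) * b ^ (-θ') := by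
            rw [← Real.rpow_add hb0]; congr 1; rw [hθθ]; ring
    have hless : m * (1 + ‖z‖^2) ≤ b := by
      have h2 := norm_sq_le z
      have h3 : 0 ≤ ‖z‖^2 := sq_nonneg _
      rw [hbdef]
      nlinarith [sq_nonneg z.1, sq_nonneg z.2]
    have step2 : b ^ (-θ') ≤ (m * (1 + ‖z‖^2)) ^ (-θ') := by
      apply Real.rpow_le_rpow_of_nonpos (by positivity) hless (by linarith)
    have step3 : (m * (1 + ‖z‖^2)) ^ (-θ') = m ^ (-θ') * (1 + ‖z‖^2) ^ (-θ') := by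
      rw [Real.mul_rpow hm.le (by positivity)]
    have hexp : -(2*θ')/2 = -θ' := by ring
    rw [hexp]
    calc b ^ (-θ) * (1 + Real.log b) ≤ (1 + ε⁻¹) * b ^ (-θ') := step1
      _ ≤ (1 + ε⁻¹) * (m ^ (-θ') * (1 + ‖z‖^2) ^ (-θ')) := by
          apply mul_le_mul_of_nonneg_left _ (by positivity)
          rw [← step3]; exact step2
      _ = (1 + ε⁻¹) * m ^ (-θ') * (1 + ‖z‖^2) ^ (-θ') := by ring

lemma integrable_of_le_master {c θ : ℝ} (hc : 0 < c) (hθ : 1 < θ) {F : ℝ × ℝ → ℝ}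
    (hmeas : AEStronglyMeasurable F (volume : Measure (ℝ × ℝ))) {C : ℝ}
    (hbd : ∀ z : ℝ × ℝ, ‖F z‖ ≤
      C * ((1 + c*(z.1^2+z.2^2))^(-θ) * (1 + Real.log (1 + c*(z.1^2+z.2^2))))) :
    Integrable F :=
  ((integrable_master hc hθ).const_mul C).mono' hmeas (Filter.Eventually.of_forall hbd)

lemma aux_ineq {a d L : ℝ} (ha : 0 ≤ a) (hd : 0 ≤ d) (hL : 0 ≤ L) :
    a + d * L ≤ (a + d) * (1 + L) := by nlinarith

/-- 1-D integrability of `(1+c x²)^(-θ)` for `θ > 1/2`. -/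
lemma integrable_oneD {c θ : ℝ} (hc : 0 < c) (hθ : 1/2 < θ) :
    Integrable (fun x : ℝ => (1 + c*x^2)^(-θ)) := by
  set m := min c 1 with hmdef
  have hm : 0 < m := lt_min hc one_pos
  have hm1 : m ≤ 1 := min_le_right _ _
  have hmc : m ≤ c := min_le_left _ _
  have hmaj : Integrable (fun x : ℝ => m ^ (-θ) * (1 + ‖x‖^2) ^ (-(2*θ)/2)) := by
    apply Integrable.const_mul
    apply integrable_rpow_neg_one_add_norm_sq
    rw [Module.finrank_self]; push_cast; linarith
  refine hmaj.mono' ?_ (Filter.Eventually.of_forall fun x => ?_)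
  · apply Continuous.aestronglyMeasurable
    have hb : Continuous (fun x : ℝ => 1 + c*x^2) :=
      continuous_const.add (continuous_const.mul (continuous_id.pow 2))
    exact hb.rpow_const (fun x => Or.inl (by positivity))
  · have hb1 : (1:ℝ) ≤ 1 + c*x^2 := by nlinarith [sq_nonneg x]
    have hb0 : (0:ℝ) < 1 + c*x^2 := by linarith
    rw [Real.norm_eq_abs, abs_of_nonneg (by positivity)]
    have hless : m * (1 + ‖x‖^2) ≤ 1 + c*x^2 := by
      rw [Real.norm_eq_abs, sq_abs]; nlinarith [sq_nonneg x]
    have hexp : -(2*θ)/2 = -θ := by ring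
    rw [hexp]
    calc (1 + c*x^2) ^ (-θ) ≤ (m * (1 + ‖x‖^2)) ^ (-θ) :=
          Real.rpow_le_rpow_of_nonpos (by positivity) hless (by linarith)
      _ = m ^ (-θ) * (1 + ‖x‖^2) ^ (-θ) := Real.mul_rpow hm.le (by positivity)

include hν in
lemma continuous_g : Continuous (studentT ν) := by
  have hb : Continuous (fun x : ℝ => 1 + x^2/ν) :=
    continuous_const.add ((continuous_id.pow 2).div_const ν)
  have : ∀ x : ℝ, 1 + x^2/ν ≠ 0 := by intro x; positivity
  exact continuous_const.mul (hb.rpow_const (fun x => Or.inl (this x)))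

include hν in
lemma integrable_g : Integrable (studentT ν) := by
  have h2 : (1:ℝ)/2 < (ν+1)/2 := by linarith
  have := (integrable_oneD (c := ν⁻¹) (inv_pos.mpr hν) h2).const_mul (Kc ν)
  refine this.congr (Filter.Eventually.of_forall fun x => ?_)
  have h3 : 1 + ν⁻¹*x^2 = 1 + x^2/ν := by ring
  have h4 : -((ν+1)/2) = -(ν+1)/2 := by ring
  simp only [g_eq, h3, h4]

include hν in
lemma g_int_one_side : Integrable (fun x : ℝ => (1 + ν⁻¹*x^2)^(-((ν+1)/2))) :=
  integrable_oneD (inv_pos.mpr hν) (by linarith)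

include hν in
lemma log_g_bound (y : ℝ) {b : ℝ} (hb1 : 1 ≤ b) (hyb : 1 + y^2/ν ≤ b^2) :
    |Real.log (studentT ν y)| ≤ |Real.log (Kc ν)| + (ν+1) * Real.log b := by
  have hb0 : (0:ℝ) < b := lt_of_lt_of_le one_pos hb1
  have hK := Kc_pos hν
  have hbase : (0:ℝ) < 1 + y^2/ν := by positivity
  have h1 : Real.log (studentT ν y)
      = Real.log (Kc ν) + (-(ν+1)/2) * Real.log (1 + y^2/ν) := by
    rw [g_eq, Real.log_mul hK.ne' (by positivity), Real.log_rpow hbase]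
  have h2 : 0 ≤ Real.log (1 + y^2/ν) := Real.log_nonneg (by nlinarith [div_nonneg (sq_nonneg y) hν.le])
  have h3 : Real.log (1 + y^2/ν) ≤ 2 * Real.log b := by
    have := Real.log_le_log hbase hyb
    rwa [Real.log_pow, Nat.cast_ofNat] at this
  have h4 : 0 ≤ Real.log b := Real.log_nonneg hb1
  calc |Real.log (studentT ν y)| ≤ |Real.log (Kc ν)| + |(-(ν+1)/2) * Real.log (1 + y^2/ν)| := by
        rw [h1]; exact abs_add_le _ _
    _ ≤ |Real.log (Kc ν)| + (ν+1) * Real.log b := by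
        rw [abs_mul, abs_of_nonneg h2, abs_div, abs_neg, abs_of_nonneg (by linarith : (0:ℝ) ≤ ν+1)]
        have : |(2:ℝ)| = 2 := by norm_num
        rw [this]
        nlinarith

lemma prod_bound {b A co L a d : ℝ} (hb1 : 1 ≤ b) (hco : 0 ≤ co) (ha : 0 ≤ a) (hd : 0 ≤ d)
    (hL : |L| ≤ a + d * Real.log b) :
    ‖co * b^(-A) * L‖ ≤ (co*(a+d)) * (b^(-A) * (1+Real.log b)) := by
  have hb0 : (0:ℝ) < b := lt_of_lt_of_le one_pos hb1
  have hlb : 0 ≤ Real.log b := Real.log_nonneg hb1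
  have hr : 0 ≤ b^(-A) := Real.rpow_nonneg hb0.le _
  rw [norm_mul, norm_mul, Real.norm_eq_abs, Real.norm_eq_abs, Real.norm_eq_abs,
    abs_of_nonneg hco, abs_of_nonneg hr]
  calc co * b^(-A) * |L| ≤ co * b^(-A) * ((a+d)*(1+Real.log b)) := by
        apply mul_le_mul_of_nonneg_left (le_trans hL (aux_ineq ha hd hlb)) (by positivity)
    _ = (co*(a+d)) * (b^(-A)*(1+Real.log b)) := by ring

lemma f0_eq (x v : ℝ) : f0 ν x v = (2*π)⁻¹ * (1 + ν⁻¹*(x^2+v^2))^(-((ν+2)/2)) := by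
  have hbase : 1+(x^2+v^2)/ν = 1+ν⁻¹*(x^2+v^2) := by ring
  have hexp : -(ν+2)/2 = -((ν+2)/2) := by ring
  rw [f0, hbase, hexp]

include hν in
lemma b_ge_one (x v : ℝ) : (1:ℝ) ≤ 1 + ν⁻¹*(x^2+v^2) := by
  nlinarith [sq_nonneg x, sq_nonneg v, inv_pos.mpr hν]

include hν in
lemma log_f0 (x v : ℝ) : Real.log (f0 ν x v)
    = -Real.log (2*π) + (-((ν+2)/2)) * Real.log (1 + ν⁻¹*(x^2+v^2)) := by
  have hb0 : (0:ℝ) < 1 + ν⁻¹*(x^2+v^2) := lt_of_lt_of_le one_pos (b_ge_one hν x v)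
  have hpi : (0:ℝ) < 2*π := by have := Real.pi_pos; linarith
  rw [f0_eq, Real.log_mul (by positivity) (by positivity), Real.log_rpow hb0, Real.log_inv]

include hν in
lemma continuous_f0 : Continuous (fun z : ℝ × ℝ => f0 ν z.1 z.2) := by
  have hb : Continuous (fun z : ℝ × ℝ => 1 + (z.1^2+z.2^2)/ν) :=
    continuous_const.add (((continuous_fst.pow 2).add (continuous_snd.pow 2)).div_const ν)
  have hne : ∀ z : ℝ × ℝ, 1 + (z.1^2+z.2^2)/ν ≠ 0 := fun z => by positivity
  exact continuous_const.mul (hb.rpow_const (fun z => Or.inl (hne z)))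

include hν in
lemma continuous_log_g : Continuous (fun x : ℝ => Real.log (studentT ν x)) :=
  (continuous_g hν).log (fun x => (g_pos hν x).ne')

include hν in
lemma continuous_biv {ρ : ℝ} (hρ : ρ ∈ Set.Ioo (-1:ℝ) 1) :
    Continuous (fun z : ℝ × ℝ => bivStudentT ν ρ z.1 z.2) := by
  have h2 : 0 < 1 - ρ^2 := by have := sq_lt_one hρ; linarith
  have hb : Continuous (fun z : ℝ × ℝ =>
      1 + (z.1 ^ 2 - 2 * ρ * z.1 * z.2 + z.2 ^ 2) / (ν * (1 - ρ ^ 2))) := by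
    apply continuous_const.add
    apply Continuous.div_const
    exact ((continuous_fst.pow 2).sub
      (((continuous_const.mul continuous_fst)).mul continuous_snd)).add (continuous_snd.pow 2)
  have hne : ∀ z : ℝ × ℝ,
      1 + (z.1 ^ 2 - 2 * ρ * z.1 * z.2 + z.2 ^ 2) / (ν * (1 - ρ ^ 2)) ≠ 0 := by
    intro z
    have hq : 0 ≤ z.1 ^ 2 - 2 * ρ * z.1 * z.2 + z.2 ^ 2 := by
      nlinarith [sq_nonneg (z.1 - ρ*z.2), sq_nonneg z.2]
    positivity
  exact continuous_const.mul (hb.rpow_const (fun z => Or.inl (hne z)))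

include hν in
lemma hA : 1 < (ν+2)/2 := by linarith

include hν in
lemma int_F1 : Integrable (fun z : ℝ × ℝ => f0 ν z.1 z.2) := by
  apply integrable_of_le_master (inv_pos.mpr hν) (hA hν)
    ((continuous_f0 hν).aestronglyMeasurable) (C := (2*π)⁻¹ * (1 + 0))
  intro z
  rw [f0_eq]
  have := prod_bound (A := (ν+2)/2) (co := (2*π)⁻¹) (L := (1:ℝ)) (b_ge_one hν z.1 z.2)
    (by positivity) zero_le_one le_rfl (by simp)
  calc ‖(2*π)⁻¹ * (1 + ν⁻¹*(z.1^2+z.2^2))^(-((ν+2)/2))‖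
      = ‖(2*π)⁻¹ * (1 + ν⁻¹*(z.1^2+z.2^2))^(-((ν+2)/2)) * 1‖ := by rw [mul_one]
    _ ≤ _ := this

include hν in
lemma int_F2 : Integrable (fun z : ℝ × ℝ => f0 ν z.1 z.2 * Real.log (f0 ν z.1 z.2)) := by
  have hmeas : AEStronglyMeasurable (fun z : ℝ × ℝ => f0 ν z.1 z.2 * Real.log (f0 ν z.1 z.2))
      (volume : Measure (ℝ × ℝ)) :=
    ((continuous_f0 hν).mul ((continuous_f0 hν).log (fun z => (f0_pos hν z.1 z.2).ne'))).aestronglyMeasurable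
  apply integrable_of_le_master (inv_pos.mpr hν) (hA hν) hmeas
    (C := (2*π)⁻¹ * (|Real.log (2*π)| + (ν+2)/2))
  intro z
  have hb1 := b_ge_one hν z.1 z.2
  have hlb : 0 ≤ Real.log (1 + ν⁻¹*(z.1^2+z.2^2)) := Real.log_nonneg hb1
  have hL : |Real.log (f0 ν z.1 z.2)|
      ≤ |Real.log (2*π)| + ((ν+2)/2) * Real.log (1 + ν⁻¹*(z.1^2+z.2^2)) := by
    rw [log_f0 hν]
    calc |(-Real.log (2*π)) + (-((ν+2)/2)) * Real.log (1 + ν⁻¹*(z.1^2+z.2^2))|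
        ≤ |(-Real.log (2*π))| + |(-((ν+2)/2)) * Real.log (1 + ν⁻¹*(z.1^2+z.2^2))| := abs_add_le _ _
      _ = |Real.log (2*π)| + ((ν+2)/2) * Real.log (1 + ν⁻¹*(z.1^2+z.2^2)) := by
          rw [abs_neg, abs_mul, abs_neg, abs_of_nonneg (by linarith : (0:ℝ) ≤ (ν+2)/2),
            abs_of_nonneg hlb]
  have := prod_bound (A := (ν+2)/2) (co := (2*π)⁻¹) (b_ge_one hν z.1 z.2)
    (by positivity) (abs_nonneg _) (by linarith) hL
  calc ‖f0 ν z.1 z.2 * Real.log (f0 ν z.1 z.2)‖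
      = ‖(2*π)⁻¹ * (1 + ν⁻¹*(z.1^2+z.2^2))^(-((ν+2)/2)) * Real.log (f0 ν z.1 z.2)‖ := by
        rw [← f0_eq]
    _ ≤ _ := this

include hν in
lemma int_log_g_aux {w : ℝ × ℝ → ℝ} (hw : Continuous w)
    (hwb : ∀ z : ℝ × ℝ, 1 + (w z)^2/ν ≤ (1 + ν⁻¹*(z.1^2+z.2^2))^2) :
    Integrable (fun z : ℝ × ℝ => f0 ν z.1 z.2 * Real.log (studentT ν (w z))) := by
  have hmeas : AEStronglyMeasurable
      (fun z : ℝ × ℝ => f0 ν z.1 z.2 * Real.log (studentT ν (w z)))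
      (volume : Measure (ℝ × ℝ)) :=
    ((continuous_f0 hν).mul ((continuous_log_g hν).comp hw)).aestronglyMeasurable
  apply integrable_of_le_master (inv_pos.mpr hν) (hA hν) hmeas
    (C := (2*π)⁻¹ * (|Real.log (Kc ν)| + (ν+1)))
  intro z
  have hb1 := b_ge_one hν z.1 z.2
  have hL := log_g_bound hν (w z) hb1 (hwb z)
  have := prod_bound (A := (ν+2)/2) (co := (2*π)⁻¹) hb1
    (by positivity) (abs_nonneg _) (by linarith) hL
  calc ‖f0 ν z.1 z.2 * Real.log (studentT ν (w z))‖
      = ‖(2*π)⁻¹ * (1 + ν⁻¹*(z.1^2+z.2^2))^(-((ν+2)/2)) * Real.log (studentT ν (w z))‖ := by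
        rw [← f0_eq]
    _ ≤ _ := this

include hν in
lemma int_F3 : Integrable (fun z : ℝ × ℝ => f0 ν z.1 z.2 * Real.log (studentT ν z.1)) := by
  apply int_log_g_aux hν continuous_fst
  intro z
  have h0 : 0 < ν⁻¹ := inv_pos.mpr hν
  have : z.1^2/ν = ν⁻¹ * z.1^2 := by ring
  rw [this]
  nlinarith [sq_nonneg z.1, sq_nonneg z.2, mul_nonneg h0.le (sq_nonneg z.1),
    mul_nonneg h0.le (sq_nonneg z.2), sq_nonneg (ν⁻¹*(z.1^2+z.2^2))]

include hν in
lemma int_Q : Integrable (fun z : ℝ × ℝ => f0 ν z.1 z.2 * Real.log (studentT ν z.2)) := by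
  apply int_log_g_aux hν continuous_snd
  intro z
  have h0 : 0 < ν⁻¹ := inv_pos.mpr hν
  have : z.2^2/ν = ν⁻¹ * z.2^2 := by ring
  rw [this]
  nlinarith [sq_nonneg z.1, sq_nonneg z.2, mul_nonneg h0.le (sq_nonneg z.1),
    mul_nonneg h0.le (sq_nonneg z.2), sq_nonneg (ν⁻¹*(z.1^2+z.2^2))]

include hν in
lemma int_F4 {ρ : ℝ} (hρ : ρ ∈ Set.Ioo (-1:ℝ) 1) :
    Integrable (fun z : ℝ × ℝ =>
      f0 ν z.1 z.2 * Real.log (studentT ν (Real.sqrt (1-ρ^2) * z.2 + ρ * z.1))) := by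
  apply int_log_g_aux hν
    ((continuous_const.mul continuous_snd).add (continuous_const.mul continuous_fst))
  intro z
  have h0 : 0 < ν⁻¹ := inv_pos.mpr hν
  have hs2 := s_sq hρ
  have hρ2 := sq_lt_one hρ
  set s := Real.sqrt (1-ρ^2)
  have hy2 : (s * z.2 + ρ * z.1)^2 ≤ 2*(z.1^2+z.2^2) := by
    nlinarith [sq_nonneg (s*z.2 - ρ*z.1), sq_nonneg z.1, sq_nonneg z.2]
  have : (s * z.2 + ρ * z.1)^2/ν = ν⁻¹ * (s * z.2 + ρ * z.1)^2 := by ring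
  show 1 + (s * z.2 + ρ * z.1)^2/ν ≤ (1 + ν⁻¹*(z.1^2+z.2^2))^2
  rw [this]
  nlinarith [mul_nonneg h0.le (sq_nonneg z.1), mul_nonneg h0.le (sq_nonneg z.2),
    sq_nonneg (ν⁻¹*(z.1^2+z.2^2)), mul_le_mul_of_nonneg_left hy2 h0.le]

include hν in
lemma biv_le {ρ : ℝ} (hρ : ρ ∈ Set.Ioo (-1:ℝ) 1) (x y : ℝ) :
    bivStudentT ν ρ x y ≤ (2*π*Real.sqrt (1-ρ^2))⁻¹ *
      (1 + (2*ν)⁻¹*(x^2+y^2))^(-((ν+2)/2)) := by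
  have hs := s_pos hρ
  have hs2 := s_sq hρ
  have hρ2 := sq_lt_one hρ
  have h2 : 0 < 1 - ρ^2 := by linarith
  have hpi := Real.pi_pos
  have hb1 : (1:ℝ) ≤ 1 + (2*ν)⁻¹*(x^2+y^2) := by
    nlinarith [sq_nonneg x, sq_nonneg y, inv_pos.mpr (by linarith : (0:ℝ) < 2*ν)]
  have hbase : 1 + (2*ν)⁻¹*(x^2+y^2) ≤ 1 + (x ^ 2 - 2 * ρ * x * y + y ^ 2) / (ν * (1 - ρ ^ 2)) := by
    have key : (x^2+y^2) * (ν * (1-ρ^2)) ≤ (x ^ 2 - 2 * ρ * x * y + y ^ 2) * (2*ν) := by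
      nlinarith [sq_nonneg (x - ρ*y), sq_nonneg (y - ρ*x), hν.le]
    have h3 : (2*ν)⁻¹*(x^2+y^2) ≤ (x ^ 2 - 2 * ρ * x * y + y ^ 2) / (ν * (1 - ρ ^ 2)) := by
      rw [inv_mul_eq_div, div_le_div_iff₀ (by linarith) (by positivity)]
      linarith [key]
    linarith
  have hrw : -(ν+2)/2 = -((ν+2)/2) := by ring
  rw [bivStudentT, one_div, hrw]
  apply mul_le_mul_of_nonneg_left _ (by positivity)
  exact Real.rpow_le_rpow_of_nonpos (by linarith) hbase (by linarith)

include hν in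
lemma int_R {ρ : ℝ} (hρ : ρ ∈ Set.Ioo (-1:ℝ) 1) :
    Integrable (fun z : ℝ × ℝ => bivStudentT ν ρ z.1 z.2 * Real.log (studentT ν z.2)) := by
  have hs := s_pos hρ
  have hpi := Real.pi_pos
  have hmeas : AEStronglyMeasurable
      (fun z : ℝ × ℝ => bivStudentT ν ρ z.1 z.2 * Real.log (studentT ν z.2))
      (volume : Measure (ℝ × ℝ)) :=
    ((continuous_biv hν hρ).mul ((continuous_log_g hν).comp continuous_snd)).aestronglyMeasurable
  have h2ν : (0:ℝ) < (2*ν)⁻¹ := by positivity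
  apply integrable_of_le_master h2ν (hA hν) hmeas
    (C := (2*π*Real.sqrt (1-ρ^2))⁻¹ * (|Real.log (Kc ν)| + (ν+1)))
  intro z
  have hb1 : (1:ℝ) ≤ 1 + (2*ν)⁻¹*(z.1^2+z.2^2) := by
    nlinarith [sq_nonneg z.1, sq_nonneg z.2]
  have hyb : 1 + z.2^2/ν ≤ (1 + (2*ν)⁻¹*(z.1^2+z.2^2))^2 := by
    have : z.2^2/ν = 2*((2*ν)⁻¹*z.2^2) := by field_simp
    rw [this]
    nlinarith [mul_nonneg h2ν.le (sq_nonneg z.1), mul_nonneg h2ν.le (sq_nonneg z.2),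
      sq_nonneg ((2*ν)⁻¹*(z.1^2+z.2^2))]
  have hL := log_g_bound hν z.2 hb1 hyb
  have hbd := prod_bound (A := (ν+2)/2) (co := (2*π*Real.sqrt (1-ρ^2))⁻¹) hb1
    (by positivity) (abs_nonneg _) (by linarith) hL
  have hbv := biv_le hν hρ z.1 z.2
  have hbvpos := biv_pos hν hρ z.1 z.2
  calc ‖bivStudentT ν ρ z.1 z.2 * Real.log (studentT ν z.2)‖
      = bivStudentT ν ρ z.1 z.2 * |Real.log (studentT ν z.2)| := by
        rw [norm_mul, Real.norm_eq_abs, Real.norm_eq_abs, abs_of_pos hbvpos]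
    _ ≤ ((2*π*Real.sqrt (1-ρ^2))⁻¹ * (1 + (2*ν)⁻¹*(z.1^2+z.2^2))^(-((ν+2)/2)))
          * |Real.log (studentT ν z.2)| :=
        mul_le_mul_of_nonneg_right hbv (abs_nonneg _)
    _ = ‖(2*π*Real.sqrt (1-ρ^2))⁻¹ * (1 + (2*ν)⁻¹*(z.1^2+z.2^2))^(-((ν+2)/2))
          * Real.log (studentT ν z.2)‖ := by
        rw [norm_mul, Real.norm_eq_abs, Real.norm_eq_abs]
        congr 1
        rw [abs_of_nonneg (by positivity)]
    _ ≤ _ := hbd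

include hν in
lemma radial_deriv (r : ℝ) :
    HasDerivAt (fun r : ℝ => -((1+r^2/ν) ^ (-(ν/2))))
      (r * (1+r^2/ν) ^ (-((ν+2)/2))) r := by
  have hu : HasDerivAt (fun r : ℝ => 1+r^2/ν) (2*r/ν) r := by
    have h1 : HasDerivAt (fun r : ℝ => r^2) (2*r) r := by
      simpa using (hasDerivAt_pow 2 r)
    simpa [div_eq_mul_inv, mul_comm] using (h1.div_const ν).const_add 1
  have hb0 : (0:ℝ) < 1+r^2/ν := by positivity
  have h2 := (hu.rpow_const (p := -(ν/2)) (Or.inl hb0.ne')).neg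
  refine h2.congr_deriv ?_
  have hexp : -(ν/2) - 1 = -((ν+2)/2) := by ring
  rw [hexp]
  field_simp

include hν in
lemma radial_tendsto :
    Filter.Tendsto (fun r : ℝ => -((1+r^2/ν) ^ (-(ν/2)))) Filter.atTop (nhds 0) := by
  rw [show (0:ℝ) = -0 by norm_num]
  apply Filter.Tendsto.neg
  have h1 : Filter.Tendsto (fun r : ℝ => 1+r^2/ν) Filter.atTop Filter.atTop := by
    apply Filter.tendsto_atTop_add_const_left
    apply Filter.Tendsto.atTop_div_const hν
    exact tendsto_pow_atTop (by norm_num)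
  exact (tendsto_rpow_neg_atTop (by linarith : 0 < ν/2)).comp h1

include hν in
lemma radial_integrableOn :
    IntegrableOn (fun r : ℝ => r * (1+r^2/ν) ^ (-((ν+2)/2))) (Ioi 0) := by
  apply integrableOn_Ioi_deriv_of_nonneg _ (fun x _ => radial_deriv hν x) _ (radial_tendsto hν)
  · exact ((radial_deriv hν 0).continuousAt).continuousWithinAt
  · intro x hx
    have : (0:ℝ) < 1 + x^2/ν := by positivity
    have hx0 : (0:ℝ) < x := hx
    positivity

include hν in
lemma radial_integral :
    ∫ r in Ioi (0:ℝ), r * (1+r^2/ν) ^ (-((ν+2)/2)) = 1 := by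
  rw [integral_Ioi_of_hasDerivAt_of_tendsto
    ((radial_deriv hν 0).continuousAt).continuousWithinAt
    (fun x _ => radial_deriv hν x) (radial_integrableOn hν) (radial_tendsto hν)]
  norm_num

include hν in
lemma f0_norm : ∫ z : ℝ × ℝ, f0 ν z.1 z.2 = 1 := by
  have key := integral_comp_polarCoord_symm (fun z : ℝ × ℝ => f0 ν z.1 z.2)
  have hval : ∀ p : ℝ × ℝ, p.1 • f0 ν (polarCoord.symm p).1 (polarCoord.symm p).2
      = p.1 * ((2*π)⁻¹ * (1+p.1^2/ν) ^ (-((ν+2)/2))) := by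
    intro p
    have h1 : (p.1 * Real.cos p.2)^2 + (p.1 * Real.sin p.2)^2 = p.1^2 := by
      nlinarith [Real.sin_sq_add_cos_sq p.2]
    rw [polarCoord_symm_apply]
    simp only [smul_eq_mul, f0]
    rw [h1]
    congr 1
    have hexp : -(ν+2)/2 = -((ν+2)/2) := by ring
    rw [hexp]
  rw [← key]
  calc ∫ p in polarCoord.target, p.1 • f0 ν (polarCoord.symm p).1 (polarCoord.symm p).2
      = ∫ p in polarCoord.target,
          (p.1 * ((2*π)⁻¹ * (1+p.1^2/ν) ^ (-((ν+2)/2)))) * (fun _ : ℝ => (1:ℝ)) p.2 := by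
        apply setIntegral_congr_fun polarCoord.open_target.measurableSet
        intro p _
        simpa using hval p
    _ = (∫ r in Ioi (0:ℝ), r * ((2*π)⁻¹ * (1+r^2/ν) ^ (-((ν+2)/2))))
          * ∫ θ in Ioo (-π) π, (1:ℝ) := by
        rw [show polarCoord.target = Ioi (0:ℝ) ×ˢ Ioo (-π) π from rfl,
          Measure.volume_eq_prod, ← Measure.prod_restrict]
        exact integral_prod_mul (fun r => r * ((2*π)⁻¹ * (1+r^2/ν) ^ (-((ν+2)/2)))) (fun _ => (1:ℝ))
    _ = 1 := by
        have h1 : ∫ θ in Ioo (-π) π, (1:ℝ) = 2*π := by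
          simp [Real.volume_Ioo]
          rw [max_eq_left (by have := Real.pi_pos; linarith)]
          ring
        have h2 : (∫ r in Ioi (0:ℝ), r * ((2*π)⁻¹ * (1+r^2/ν) ^ (-((ν+2)/2))))
            = (2*π)⁻¹ * ∫ r in Ioi (0:ℝ), r * (1+r^2/ν) ^ (-((ν+2)/2)) := by
          rw [← integral_const_mul]
          congr 1; funext r; ring
        rw [h1, h2, radial_integral hν]
        have := Real.pi_pos
        field_simp

include hν in
lemma gauss_gamma_int : Integrable (Function.uncurry (fun (x t : ℝ) =>
    t ^ ((ν+1)/2 - 1) * Real.exp (-((1+x^2/ν)*t))))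
    (volume.prod (volume.restrict (Ioi 0))) := by
  set a := (ν+1)/2 with hadef
  have ha : 0 < a := by rw [hadef]; linarith
  have hmeas : AEStronglyMeasurable (Function.uncurry (fun (x t : ℝ) =>
      t ^ (a - 1) * Real.exp (-((1+x^2/ν)*t)))) (volume.prod (volume.restrict (Ioi 0))) := by
    apply Measurable.aestronglyMeasurable
    apply Measurable.mul
    · exact measurable_snd.pow_const _
    · apply Real.measurable_exp.comp
      apply Measurable.neg
      exact ((measurable_const.add ((measurable_fst.pow_const 2).div_const ν)).mul measurable_snd)
  rw [integrable_prod_iff hmeas]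
  constructor
  · apply Filter.Eventually.of_forall
    intro x
    have hr : (1:ℝ) ≤ 1 + x^2/ν := by nlinarith [div_nonneg (sq_nonneg x) hν.le]
    apply (GammaIntegral_convergent ha).mono'
    · apply Measurable.aestronglyMeasurable
      fun_prop
    · rw [ae_restrict_iff' measurableSet_Ioi]
      apply Filter.Eventually.of_forall
      intro t ht
      have ht0 : (0:ℝ) < t := ht
      simp only [Function.uncurry]
      rw [Real.norm_eq_abs,
        abs_of_nonneg (mul_nonneg (Real.rpow_nonneg ht0.le _) (Real.exp_nonneg _))]
      have : Real.exp (-((1+x^2/ν)*t)) ≤ Real.exp (-t) := by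
        apply Real.exp_le_exp.mpr
        nlinarith
      calc t ^ (a-1) * Real.exp (-((1+x^2/ν)*t)) ≤ t ^ (a-1) * Real.exp (-t) :=
            mul_le_mul_of_nonneg_left this (Real.rpow_nonneg ht0.le _)
        _ = Real.exp (-t) * t ^ (a-1) := by ring
  · apply Integrable.congr ((g_int_one_side hν).const_mul (Real.Gamma a))
    apply Filter.Eventually.of_forall
    intro x
    have hr : (0:ℝ) < 1 + x^2/ν := by positivity
    have hval : ∫ t in Ioi (0:ℝ), ‖t ^ (a - 1) * Real.exp (-((1+x^2/ν)*t))‖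
        = ∫ t in Ioi (0:ℝ), t ^ (a - 1) * Real.exp (-((1+x^2/ν)*t)) := by
      apply setIntegral_congr_fun measurableSet_Ioi
      intro t ht
      have ht0 : (0:ℝ) < t := ht
      simp only [Real.norm_eq_abs]
      exact abs_of_nonneg (mul_nonneg (Real.rpow_nonneg ht0.le _) (Real.exp_nonneg _))
    simp only [Function.uncurry]
    rw [hval, integral_rpow_mul_exp_neg_mul_Ioi ha hr, one_div, Real.inv_rpow hr.le,
      ← Real.rpow_neg hr.le,
      show 1 + ν⁻¹*x^2 = 1 + x^2/ν from by ring, hadef]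
    ring

include hν in
lemma g_norm : ∫ x : ℝ, studentT ν x = 1 := by
  set a := (ν+1)/2 with hadef
  have ha : 0 < a := by rw [hadef]; linarith
  have hΓa : 0 < Real.Gamma a := Real.Gamma_pos_of_pos ha
  have hΓν : 0 < Real.Gamma (ν/2) := Real.Gamma_pos_of_pos (by linarith)
  have hπ := Real.pi_pos
  have step1 : ∀ x : ℝ, studentT ν x = (Kc ν * (Real.Gamma a)⁻¹) *
      ∫ t in Ioi (0:ℝ), t ^ (a - 1) * Real.exp (-((1+x^2/ν)*t)) := by
    intro x
    have hr : (0:ℝ) < 1 + x^2/ν := by positivity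
    rw [integral_rpow_mul_exp_neg_mul_Ioi ha hr, g_eq, one_div, Real.inv_rpow hr.le,
      ← Real.rpow_neg hr.le, show -a = -(ν+1)/2 from by rw [hadef]; ring]
    field_simp
  calc ∫ x : ℝ, studentT ν x
      = ∫ x : ℝ, (Kc ν * (Real.Gamma a)⁻¹) *
        ∫ t in Ioi (0:ℝ), t ^ (a - 1) * Real.exp (-((1+x^2/ν)*t)) := by
        congr 1; funext x; exact step1 x
    _ = (Kc ν * (Real.Gamma a)⁻¹) * ∫ x : ℝ,
        ∫ t in Ioi (0:ℝ), t ^ (a - 1) * Real.exp (-((1+x^2/ν)*t)) := integral_const_mul _ _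
    _ = (Kc ν * (Real.Gamma a)⁻¹) * ∫ t in Ioi (0:ℝ),
        ∫ x : ℝ, t ^ (a - 1) * Real.exp (-((1+x^2/ν)*t)) := by
        rw [integral_integral_swap (gauss_gamma_int hν)]
    _ = (Kc ν * (Real.Gamma a)⁻¹) * ∫ t in Ioi (0:ℝ),
        Real.sqrt (π*ν) * (t ^ (ν/2 - 1) * Real.exp (-(1*t))) := by
        congr 1
        apply setIntegral_congr_fun measurableSet_Ioi
        intro t ht
        have ht0 : (0:ℝ) < t := ht
        have hsplit : ∀ x : ℝ, t ^ (a - 1) * Real.exp (-((1+x^2/ν)*t))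
            = (t ^ (a - 1) * Real.exp (-t)) * Real.exp (-(t/ν) * x^2) := by
          intro x
          rw [show (t^(a-1)*Real.exp (-t)) * Real.exp (-(t/ν)*x^2)
              = t^(a-1) * (Real.exp (-t) * Real.exp (-(t/ν)*x^2)) from by ring,
            ← Real.exp_add]
          congr 1
          field_simp
          ring
        simp only [hsplit]
        rw [integral_const_mul, integral_gaussian]
        have hπ := Real.pi_pos
        have hgauss : Real.sqrt (π/(t/ν)) = Real.sqrt (π*ν) * t ^ (-(1:ℝ)/2) := by
          rw [show π/(t/ν) = (π*ν)/t from by field_simp, Real.sqrt_div (by positivity) t,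
            Real.sqrt_eq_rpow t, div_eq_mul_inv, ← Real.rpow_neg ht0.le]
          norm_num
        rw [hgauss]
        rw [show t ^ (a-1) * Real.exp (-t) * (Real.sqrt (π*ν) * t ^ (-(1:ℝ)/2))
            = Real.sqrt (π*ν) * ((t ^ (a-1) * t ^ (-(1:ℝ)/2)) * Real.exp (-t)) from by ring,
          ← Real.rpow_add ht0, show a - 1 + -(1:ℝ)/2 = ν/2 - 1 from by rw [hadef]; ring,
          show Real.exp (-t) = Real.exp (-(1*t)) from by rw [one_mul]]
    _ = (Kc ν * (Real.Gamma a)⁻¹) * (Real.sqrt (π*ν) * ((1/1) ^ (ν/2) * Real.Gamma (ν/2))) := by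
        rw [integral_const_mul, integral_rpow_mul_exp_neg_mul_Ioi (by linarith : (0:ℝ) < ν/2)
          one_pos]
    _ = 1 := by
        have hs : (0:ℝ) < Real.sqrt (π*ν) := Real.sqrt_pos.mpr (by positivity)
        have hsc : Real.sqrt (ν*π) = Real.sqrt (π*ν) := by rw [mul_comm]
        rw [Kc, hsc, one_div_one, Real.one_rpow, one_mul]
        field_simp
        rw [hadef]

lemma integral_scale_shift (F : ℝ → ℝ) {s : ℝ} (hs : 0 < s) (b : ℝ) :
    s * ∫ v : ℝ, F (s*v + b) = ∫ y : ℝ, F y := by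
  have h1 : ∫ v : ℝ, F (s*v + b) = |s⁻¹| • ∫ y : ℝ, F (y + b) :=
    MeasureTheory.Measure.integral_comp_mul_left (fun y => F (y + b)) s
  rw [h1, integral_add_right_eq_self F b, abs_of_pos (inv_pos.mpr hs), smul_eq_mul,
    ← mul_assoc, mul_inv_cancel₀ hs.ne', one_mul]

include hν in
lemma pointwise_P {ρ : ℝ} (hρ : ρ ∈ Set.Ioo (-1:ℝ) 1) (x v : ℝ) :
    Real.sqrt (1-ρ^2) * (bivStudentT ν ρ x (Real.sqrt (1-ρ^2)*v + ρ*x) *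
      Real.log (bivStudentT ν ρ x (Real.sqrt (1-ρ^2)*v + ρ*x) /
        (studentT ν x * studentT ν (Real.sqrt (1-ρ^2)*v + ρ*x))))
    = f0 ν x v * (Real.log (f0 ν x v) - Real.log (Real.sqrt (1-ρ^2))
        - Real.log (studentT ν x) - Real.log (studentT ν (Real.sqrt (1-ρ^2)*v + ρ*x))) := by
  have hs := s_pos hρ
  have hq := f0_pos hν x v
  have ha := g_pos hν x
  have hb := g_pos hν (Real.sqrt (1-ρ^2)*v + ρ*x)
  rw [biv_sub hν hρ]
  set s := Real.sqrt (1-ρ^2)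
  set q := f0 ν x v
  set A := studentT ν x
  set B := studentT ν (s*v + ρ*x)
  have h1 : q / s / (A * B) = q / (s * (A * B)) := by rw [div_div]
  rw [h1]
  have h2 : Real.log (q / (s * (A * B)))
      = Real.log q - Real.log s - Real.log A - Real.log B := by
    rw [Real.log_div hq.ne' (by positivity), Real.log_mul hs.ne' (by positivity),
      Real.log_mul ha.ne' hb.ne']
    ring
  rw [h2]
  field_simp

include hν in
lemma F4_eq_Q {ρ : ℝ} (hρ : ρ ∈ Set.Ioo (-1:ℝ) 1) :
    ∫ z : ℝ × ℝ, f0 ν z.1 z.2 * Real.log (studentT ν (Real.sqrt (1-ρ^2)*z.2 + ρ*z.1))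
    = ∫ z : ℝ × ℝ, f0 ν z.1 z.2 * Real.log (studentT ν z.2) := by
  have hs := s_pos hρ
  set s := Real.sqrt (1-ρ^2) with hsdef
  -- convert LHS to iterated integral of R_ρ
  have hint4 : Integrable (Function.uncurry (fun x v => f0 ν x v *
      Real.log (studentT ν (s*v + ρ*x)))) (volume.prod volume) := by
    rw [← Measure.volume_eq_prod]; exact int_F4 hν hρ
  have hintR : Integrable (Function.uncurry (fun x y => bivStudentT ν ρ x y *
      Real.log (studentT ν y))) (volume.prod volume) := by
    rw [← Measure.volume_eq_prod]; exact int_R hν hρ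
  have hintQ : Integrable (Function.uncurry (fun x y => f0 ν x y *
      Real.log (studentT ν y))) (volume.prod volume) := by
    rw [← Measure.volume_eq_prod]; exact int_Q hν
  have step1 : ∀ x : ℝ, ∫ y : ℝ, bivStudentT ν ρ x y * Real.log (studentT ν y)
      = ∫ v : ℝ, f0 ν x v * Real.log (studentT ν (s*v + ρ*x)) := by
    intro x
    rw [← integral_scale_shift (fun y => bivStudentT ν ρ x y * Real.log (studentT ν y)) hs (ρ*x),
      ← integral_const_mul]
    congr 1
    funext v
    rw [biv_sub hν hρ, ← hsdef]
    field_simp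
  have step2 : ∀ y : ℝ, ∫ x : ℝ, bivStudentT ν ρ x y = ∫ x : ℝ, f0 ν x y := by
    intro y
    rw [← integral_scale_shift (fun x => bivStudentT ν ρ x y) hs (ρ*y), ← integral_const_mul]
    congr 1
    funext u
    rw [biv_sub' hν hρ, ← hsdef]
    field_simp
  calc ∫ z : ℝ × ℝ, f0 ν z.1 z.2 * Real.log (studentT ν (s*z.2 + ρ*z.1))
      = ∫ x : ℝ, ∫ v : ℝ, f0 ν x v * Real.log (studentT ν (s*v + ρ*x)) := by
        rw [Measure.volume_eq_prod]
        exact (integral_integral hint4).symm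
    _ = ∫ x : ℝ, ∫ y : ℝ, bivStudentT ν ρ x y * Real.log (studentT ν y) := by
        congr 1; funext x; exact (step1 x).symm
    _ = ∫ y : ℝ, ∫ x : ℝ, bivStudentT ν ρ x y * Real.log (studentT ν y) :=
        integral_integral_swap hintR
    _ = ∫ y : ℝ, ∫ x : ℝ, f0 ν x y * Real.log (studentT ν y) := by
        congr 1; funext y
        rw [integral_mul_const, integral_mul_const, step2 y]
    _ = ∫ x : ℝ, ∫ y : ℝ, f0 ν x y * Real.log (studentT ν y) :=
        (integral_integral_swap hintQ).symm
    _ = ∫ z : ℝ × ℝ, f0 ν z.1 z.2 * Real.log (studentT ν z.2) := by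
        rw [Measure.volume_eq_prod]
        exact integral_integral hintQ

include hν in
lemma MI_eq {ρ : ℝ} (hρ : ρ ∈ Set.Ioo (-1:ℝ) 1) :
    studentTMI ν ρ = -Real.log (Real.sqrt (1-ρ^2))
      + ((∫ z : ℝ × ℝ, f0 ν z.1 z.2 * Real.log (f0 ν z.1 z.2))
         - (∫ z : ℝ × ℝ, f0 ν z.1 z.2 * Real.log (studentT ν z.1))
         - (∫ z : ℝ × ℝ, f0 ν z.1 z.2 * Real.log (studentT ν z.2))) := by
  have hs := s_pos hρ
  set s := Real.sqrt (1-ρ^2) with hsdef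
  have hintP : Integrable (Function.uncurry (fun x v => f0 ν x v *
      (Real.log (f0 ν x v) - Real.log s - Real.log (studentT ν x)
        - Real.log (studentT ν (s*v + ρ*x))))) (volume.prod volume) := by
    rw [← Measure.volume_eq_prod]
    have h := (((int_F2 hν).sub ((int_F1 hν).mul_const (Real.log s))).sub (int_F3 hν)).sub
      (int_F4 hν hρ)
    refine h.congr (Filter.Eventually.of_forall fun z => ?_)
    simp only [Function.uncurry, Pi.sub_apply, Pi.add_apply, Pi.neg_apply]
    ring
  have step1 : studentTMI ν ρ = ∫ x : ℝ, ∫ v : ℝ, f0 ν x v *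
      (Real.log (f0 ν x v) - Real.log s - Real.log (studentT ν x)
        - Real.log (studentT ν (s*v + ρ*x))) := by
    rw [studentTMI]
    congr 1
    funext x
    rw [← integral_scale_shift (fun y => bivStudentT ν ρ x y *
      Real.log (bivStudentT ν ρ x y / (studentT ν x * studentT ν y))) hs (ρ*x),
      ← integral_const_mul]
    congr 1
    funext v
    exact pointwise_P hν hρ x v
  rw [step1, integral_integral hintP]
  have expand : (fun z : ℝ × ℝ => f0 ν z.1 z.2 *
      (Real.log (f0 ν z.1 z.2) - Real.log s - Real.log (studentT ν z.1)
        - Real.log (studentT ν (s*z.2 + ρ*z.1))))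
      = fun z : ℝ × ℝ => (f0 ν z.1 z.2 * Real.log (f0 ν z.1 z.2)
        - (f0 ν z.1 z.2) * Real.log s - f0 ν z.1 z.2 * Real.log (studentT ν z.1)
        - f0 ν z.1 z.2 * Real.log (studentT ν (s*z.2 + ρ*z.1))) := by
    funext z; ring
  clear expand
  have hvol : (volume : Measure (ℝ × ℝ)) = volume.prod volume := Measure.volume_eq_prod ℝ ℝ
  calc ∫ z : ℝ × ℝ, (fun x v => f0 ν x v *
      (Real.log (f0 ν x v) - Real.log s - Real.log (studentT ν x)
        - Real.log (studentT ν (s*v + ρ*x)))) z.1 z.2 ∂(volume.prod volume)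
      = ∫ z : ℝ × ℝ, (f0 ν z.1 z.2 * Real.log (f0 ν z.1 z.2)
        - (f0 ν z.1 z.2) * Real.log s - f0 ν z.1 z.2 * Real.log (studentT ν z.1)
        - f0 ν z.1 z.2 * Real.log (studentT ν (s*z.2 + ρ*z.1))) := by
        rw [← hvol]
        refine integral_congr_ae (Filter.Eventually.of_forall fun z => ?_)
        simp only
        ring
    _ = (∫ z : ℝ × ℝ, f0 ν z.1 z.2 * Real.log (f0 ν z.1 z.2))
        - (∫ z : ℝ × ℝ, (f0 ν z.1 z.2) * Real.log s)
        - (∫ z : ℝ × ℝ, f0 ν z.1 z.2 * Real.log (studentT ν z.1))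
        - (∫ z : ℝ × ℝ, f0 ν z.1 z.2 * Real.log (studentT ν (s*z.2 + ρ*z.1))) := by
        rw [integral_sub, integral_sub, integral_sub]
        · exact int_F2 hν
        · exact (int_F1 hν).mul_const _
        · exact (int_F2 hν).sub ((int_F1 hν).mul_const _)
        · exact int_F3 hν
        · exact ((int_F2 hν).sub ((int_F1 hν).mul_const _)).sub (int_F3 hν)
        · exact int_F4 hν hρ
    _ = -Real.log s
      + ((∫ z : ℝ × ℝ, f0 ν z.1 z.2 * Real.log (f0 ν z.1 z.2))
         - (∫ z : ℝ × ℝ, f0 ν z.1 z.2 * Real.log (studentT ν z.1))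
         - (∫ z : ℝ × ℝ, f0 ν z.1 z.2 * Real.log (studentT ν z.2))) := by
        rw [integral_mul_const, f0_norm hν, F4_eq_Q hν hρ]
        ring

lemma kl_ge {p q : ℝ} (hp : 0 < p) (hq : 0 < q) : 0 ≤ p * Real.log (p/q) - p + q := by
  have h := Real.log_le_sub_one_of_pos (div_pos hq hp)
  have hlog : Real.log (p/q) = -(Real.log (q/p)) := by
    rw [Real.log_div hp.ne' hq.ne', Real.log_div hq.ne' hp.ne']; ring
  have h2 := mul_le_mul_of_nonneg_left h hp.le
  have h3 : p * (q/p - 1) = q - p := by field_simp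
  rw [h3] at h2
  nlinarith

lemma kl_gt {p q : ℝ} (hp : 0 < p) (hq : 0 < q) (hne : p ≠ q) :
    0 < p * Real.log (p/q) - p + q := by
  have hne' : q/p ≠ 1 := by
    intro h
    apply hne
    field_simp at h
    linarith
  have h := Real.log_lt_sub_one_of_pos (div_pos hq hp) hne'
  have hlog : Real.log (p/q) = -(Real.log (q/p)) := by
    rw [Real.log_div hp.ne' hq.ne', Real.log_div hq.ne' hp.ne']; ring
  have h2 := mul_lt_mul_of_pos_left h hp
  have h3 : p * (q/p - 1) = q - p := by field_simp
  rw [h3] at h2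
  nlinarith

include hν in
lemma exists_ne : ∃ z : ℝ × ℝ, f0 ν z.1 z.2 ≠ studentT ν z.1 * studentT ν z.2 := by
  by_contra hcon
  push_neg at hcon
  have hπ := Real.pi_pos
  have hu : (1:ℝ) < 1 + 1/ν := by
    have : (0:ℝ) < 1/ν := by positivity
    linarith
  have hu0 : (0:ℝ) < 1 + 1/ν := by linarith
  have e1 : f0 ν 0 0 = (2*π)⁻¹ := by
    rw [f0]; norm_num
  have e2 : studentT ν 0 = Kc ν := by
    rw [g_eq]; norm_num
  have e3 : f0 ν 1 0 = (2*π)⁻¹ * (1+1/ν) ^ (-(ν+2)/2) := by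
    rw [f0]; norm_num
  have e4 : studentT ν 1 = Kc ν * (1+1/ν) ^ (-(ν+1)/2) := by
    rw [g_eq]; norm_num
  have h00 := hcon (0,0)
  have h10 := hcon (1,0)
  simp only at h00 h10
  rw [e1, e2] at h00
  rw [e3, e2, e4] at h10
  rw [show Kc ν * (1+1/ν) ^ (-(ν+1)/2) * Kc ν = Kc ν * Kc ν * (1+1/ν) ^ (-(ν+1)/2) from by ring,
    ← h00] at h10
  have hc0 : ((2*π):ℝ)⁻¹ ≠ 0 := by positivity
  have h5 : (1+1/ν) ^ (-(ν+2)/2) = (1+1/ν) ^ (-(ν+1)/2) := mul_left_cancel₀ hc0 h10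
  have h6 : (-(ν+2)/2) * Real.log (1+1/ν) = (-(ν+1)/2) * Real.log (1+1/ν) := by
    rw [← Real.log_rpow hu0, ← Real.log_rpow hu0, h5]
  have hlogu : 0 < Real.log (1+1/ν) := Real.log_pos hu
  have h7 : (-(ν+2)/2) = (-(ν+1)/2) := mul_right_cancel₀ hlogu.ne' h6
  linarith

include hν in
lemma lam_pos : 0 < (∫ z : ℝ × ℝ, f0 ν z.1 z.2 * Real.log (f0 ν z.1 z.2))
    - (∫ z : ℝ × ℝ, f0 ν z.1 z.2 * Real.log (studentT ν z.1))
    - (∫ z : ℝ × ℝ, f0 ν z.1 z.2 * Real.log (studentT ν z.2)) := by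
  set W : ℝ × ℝ → ℝ := fun z => f0 ν z.1 z.2 *
    Real.log (f0 ν z.1 z.2 / (studentT ν z.1 * studentT ν z.2)) with hWdef
  set φ : ℝ × ℝ → ℝ := fun z => W z - f0 ν z.1 z.2 + studentT ν z.1 * studentT ν z.2 with hφdef
  have hWpt : ∀ z : ℝ × ℝ, W z = f0 ν z.1 z.2 * Real.log (f0 ν z.1 z.2)
      - f0 ν z.1 z.2 * Real.log (studentT ν z.1)
      - f0 ν z.1 z.2 * Real.log (studentT ν z.2) := by
    intro z
    rw [hWdef]
    simp only
    rw [Real.log_div (f0_pos hν z.1 z.2).ne' (mul_pos (g_pos hν z.1) (g_pos hν z.2)).ne',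
      Real.log_mul (g_pos hν z.1).ne' (g_pos hν z.2).ne']
    ring
  have hintW : Integrable W := by
    have h := ((int_F2 hν).sub (int_F3 hν)).sub (int_Q hν)
    refine h.congr (Filter.Eventually.of_forall fun z => ?_)
    exact (hWpt z).symm
  have hgg : Integrable (fun z : ℝ × ℝ => studentT ν z.1 * studentT ν z.2) := by
    rw [Measure.volume_eq_prod]
    exact (integrable_g hν).mul_prod (integrable_g hν)
  have hintφ : Integrable φ := (hintW.sub (int_F1 hν)).add hgg
  have hintF23 : Integrable (fun z : ℝ × ℝ => f0 ν z.1 z.2 * Real.log (f0 ν z.1 z.2)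
      - f0 ν z.1 z.2 * Real.log (studentT ν z.1)) := (int_F2 hν).sub (int_F3 hν)
  have hW_val : ∫ z, W z = (∫ z : ℝ × ℝ, f0 ν z.1 z.2 * Real.log (f0 ν z.1 z.2))
      - (∫ z : ℝ × ℝ, f0 ν z.1 z.2 * Real.log (studentT ν z.1))
      - (∫ z : ℝ × ℝ, f0 ν z.1 z.2 * Real.log (studentT ν z.2)) := by
    have eAB : ∫ z : ℝ × ℝ, (f0 ν z.1 z.2 * Real.log (f0 ν z.1 z.2)
        - f0 ν z.1 z.2 * Real.log (studentT ν z.1))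
        = (∫ z : ℝ × ℝ, f0 ν z.1 z.2 * Real.log (f0 ν z.1 z.2))
          - ∫ z : ℝ × ℝ, f0 ν z.1 z.2 * Real.log (studentT ν z.1) :=
      integral_sub (int_F2 hν) (int_F3 hν)
    have eABC : ∫ z : ℝ × ℝ, ((f0 ν z.1 z.2 * Real.log (f0 ν z.1 z.2)
        - f0 ν z.1 z.2 * Real.log (studentT ν z.1)) - f0 ν z.1 z.2 * Real.log (studentT ν z.2))
        = (∫ z : ℝ × ℝ, (f0 ν z.1 z.2 * Real.log (f0 ν z.1 z.2)
          - f0 ν z.1 z.2 * Real.log (studentT ν z.1)))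
          - ∫ z : ℝ × ℝ, f0 ν z.1 z.2 * Real.log (studentT ν z.2) :=
      integral_sub hintF23 (int_Q hν)
    have hcg : ∫ z, W z = ∫ z : ℝ × ℝ, ((f0 ν z.1 z.2 * Real.log (f0 ν z.1 z.2)
        - f0 ν z.1 z.2 * Real.log (studentT ν z.1)) - f0 ν z.1 z.2 * Real.log (studentT ν z.2)) :=
      integral_congr_ae (Filter.Eventually.of_forall hWpt)
    rw [hcg, eABC, eAB]
  have hgg_val : ∫ z : ℝ × ℝ, studentT ν z.1 * studentT ν z.2 = 1 := by
    rw [Measure.volume_eq_prod, integral_prod_mul, g_norm hν, mul_one]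
  have hintWf : Integrable (fun z : ℝ × ℝ => W z - f0 ν z.1 z.2) := hintW.sub (int_F1 hν)
  have hφ_val : ∫ z, φ z = ∫ z, W z := by
    have e1 : ∫ z : ℝ × ℝ, ((W z - f0 ν z.1 z.2) + studentT ν z.1 * studentT ν z.2)
        = (∫ z : ℝ × ℝ, (W z - f0 ν z.1 z.2)) + ∫ z : ℝ × ℝ, studentT ν z.1 * studentT ν z.2 :=
      integral_add hintWf hgg
    have e2 : ∫ z : ℝ × ℝ, (W z - f0 ν z.1 z.2)
        = (∫ z, W z) - ∫ z : ℝ × ℝ, f0 ν z.1 z.2 := integral_sub hintW (int_F1 hν)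
    have hcg : ∫ z, φ z = ∫ z : ℝ × ℝ, ((W z - f0 ν z.1 z.2)
        + studentT ν z.1 * studentT ν z.2) := rfl
    rw [hcg, e1, e2, f0_norm hν, hgg_val]
    ring
  clear_value W φ
  -- positivity of ∫ φ
  have hφnn : ∀ z : ℝ × ℝ, 0 ≤ φ z := by
    intro z
    have := kl_ge (f0_pos hν z.1 z.2) (mul_pos (g_pos hν z.1) (g_pos hν z.2))
    simpa [hφdef, hWdef] using this
  obtain ⟨z₀, hz₀⟩ := exists_ne hν
  have hφz₀ : 0 < φ z₀ :=  by
    have := kl_gt (f0_pos hν z₀.1 z₀.2) (mul_pos (g_pos hν z₀.1) (g_pos hν z₀.2)) hz₀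
    simpa [hφdef, hWdef] using this
  have hφcont : Continuous φ := by
    have hgc : Continuous (fun z : ℝ × ℝ => studentT ν z.1 * studentT ν z.2) :=
      ((continuous_g hν).comp continuous_fst).mul ((continuous_g hν).comp continuous_snd)
    have hWc : Continuous W := by
      rw [hWdef]
      apply (continuous_f0 hν).mul
      apply Continuous.log
        ((continuous_f0 hν).div hgc (fun z => (mul_pos (g_pos hν z.1) (g_pos hν z.2)).ne'))
      intro z
      exact (div_pos (f0_pos hν z.1 z.2) (mul_pos (g_pos hν z.1) (g_pos hν z.2))).ne'
    rw [hφdef]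
    exact (hWc.sub (continuous_f0 hν)).add hgc
  have hev : ∀ᶠ z in nhds z₀, φ z₀ / 2 < φ z :=
    hφcont.continuousAt.eventually (eventually_gt_nhds (half_lt_self hφz₀))
  obtain ⟨ε, hε, hball⟩ := Metric.eventually_nhds_iff.mp hev
  have hone : 0 < ∫ z, φ z := by
    have h1 : ∫ z in Metric.ball z₀ ε, φ z ≤ ∫ z, φ z :=
      setIntegral_le_integral hintφ (Filter.Eventually.of_forall hφnn)
    have h2 : (φ z₀ / 2) * (volume (Metric.ball z₀ ε)).toReal
        ≤ ∫ z in Metric.ball z₀ ε, φ z := by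
      apply setIntegral_ge_of_const_le_real measurableSet_ball measure_ball_lt_top.ne
      · intro z hz
        exact (hball (Metric.mem_ball.mp hz)).le
      · exact hintφ.integrableOn
    have h3 : 0 < (volume (Metric.ball z₀ ε)).toReal :=
      ENNReal.toReal_pos (Metric.measure_ball_pos volume z₀ hε).ne' measure_ball_lt_top.ne
    have h4 : 0 < (φ z₀ / 2) * (volume (Metric.ball z₀ ε)).toReal :=
      mul_pos (half_pos hφz₀) h3
    linarith
  rw [hφ_val, hW_val] at hone
  exact hone

end STAux

/-- For the bivariate Student t with ν degrees of freedom, the mutual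
information is -½ log(1-ρ²) + λ_ν with λ_ν independent of ρ; for ρ = 0 it
equals λ_ν ≠ 0, so zero correlation does not imply independence. -/
theorem studentT_mutual_information_form (ν : ℝ) (hν : 0 < ν) :
    ∃ lam : ℝ, lam ≠ 0 ∧
      (∀ ρ ∈ Set.Ioo (-1 : ℝ) 1,
        studentTMI ν ρ = -(1 / 2) * Real.log (1 - ρ ^ 2) + lam) ∧
      studentTMI ν 0 = lam := by
  have h0 : (0:ℝ) ∈ Set.Ioo (-1:ℝ) 1 := by norm_num
  have hMI0 := STAux.MI_eq hν h0
  rw [show Real.sqrt (1 - (0:ℝ)^2) = 1 by norm_num [Real.sqrt_one], Real.log_one, neg_zero,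
    zero_add] at hMI0
  refine ⟨studentTMI ν 0, by rw [hMI0]; exact (STAux.lam_pos hν).ne', ?_, rfl⟩
  intro ρ hρ
  rw [STAux.MI_eq hν hρ, hMI0,
    Real.log_sqrt (by nlinarith [STAux.sq_lt_one hρ] : (0:ℝ) ≤ 1 - ρ^2)]
  ring
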